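/- Dynamic regret bound for Regime-Aware Gradient Descent: with R regimes, each f_r μ-strongly convex and L-smooth with minimizer θ_r* (∇f_r(θ_r*) = 0), per-regime states updated by projected gradient descent with step η ∈ (0, 1/L] so that q := 1 − 2μη + η²L² ∈ [0,1), and perfect regime identification, the total regret satisfies Σ_{t=1}^T (f_{r_t}(θ_t) − f_{r_t}(θ_r_t*)) ≤ Σ_{r=1}^R (L/2)·‖w_{r,0} − θ_r*‖²/(1 − q) for every horizon T, i.e., dynamic regret is uniformly bounded in T. -/
import Mathlib


open scoped RealInnerProductSpace

/-- Dynamic regret bound for Regime-Aware Gradient Descent (RA-GD):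
with perfect regime identification, cumulative dynamic regret is bounded
uniformly in the horizon `T`. -/
theorem ragd_dynamic_regret_bounded
    {d R : ℕ}
    (f : Fin R → EuclideanSpace ℝ (Fin d) → ℝ)
    (g : Fin R → EuclideanSpace ℝ (Fin d) → EuclideanSpace ℝ (Fin d))
    (θstar : Fin R → EuclideanSpace ℝ (Fin d))
    (proj : EuclideanSpace ℝ (Fin d) → EuclideanSpace ℝ (Fin d))
    (μ L η : ℝ) (hμ : 0 < μ) (hμL : μ ≤ L)
    -- each f_r is μ-strongly convex with gradient g_r
    (hsc : ∀ r x y, f r x + ⟪g r x, y - x⟫ + (μ / 2) * ‖y - x‖ ^ 2 ≤ f r y)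
    -- each f_r is L-smooth
    (hsm : ∀ r x y, f r y ≤ f r x + ⟪g r x, y - x⟫ + (L / 2) * ‖y - x‖ ^ 2)
    (hgradLip : ∀ r x y, ‖g r x - g r y‖ ≤ L * ‖x - y‖)
    (hgrad0 : ∀ r, g r (θstar r) = 0)
    -- projection onto Θ: nonexpansive and fixes each minimizer θ*_r ∈ Θ
    (hproj : ∀ x y, ‖proj x - proj y‖ ≤ ‖x - y‖)
    (hfix : ∀ r, proj (θstar r) = θstar r)
    (hη0 : 0 < η) (hη : η ≤ 1 / L)
    (hq0 : 0 ≤ 1 - 2 * μ * η + η ^ 2 * L ^ 2)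
    (hq1 : 1 - 2 * μ * η + η ^ 2 * L ^ 2 < 1)
    -- regime sequence and per-regime iterates
    (rt : ℕ → Fin R)
    (w0 : Fin R → EuclideanSpace ℝ (Fin d))
    (w : ℕ → Fin R → EuclideanSpace ℝ (Fin d))
    (hw0 : ∀ r, w 0 r = w0 r)
    (hupd : ∀ t r, w (t + 1) r =
      if r = rt t then proj (w t r - η • g r (w t r)) else w t r) :
    ∀ T : ℕ,
      (∑ t ∈ Finset.range T, (f (rt t) (w t (rt t)) - f (rt t) (θstar (rt t))))
        ≤ ∑ r : Fin R,
            (L / 2) * ‖w0 r - θstar r‖ ^ 2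
              / (1 - (1 - 2 * μ * η + η ^ 2 * L ^ 2)) := by

  intro T
  set q : ℝ := 1 - 2 * μ * η + η ^ 2 * L ^ 2 with hqdef
  have h1q : 0 < 1 - q := by simp only [hqdef]; linarith
  -- suboptimality bound
  have hsub : ∀ r x, f r x - f r (θstar r) ≤ (L / 2) * ‖x - θstar r‖ ^ 2 := by
    intro r x
    have h := hsm r (θstar r) x
    rw [hgrad0 r, inner_zero_left] at h
    linarith
  -- contraction
  have hcontr : ∀ t, ∀ r, r = rt t →
      ‖w (t + 1) r - θstar r‖ ^ 2 ≤ q * ‖w t r - θstar r‖ ^ 2 := by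
    intro t r hr
    have hx : w (t + 1) r = proj (w t r - η • g r (w t r)) := by
      rw [hupd t r, if_pos hr]
    set x := w t r with hxdef
    have hmin : f r (θstar r) + (μ / 2) * ‖x - θstar r‖ ^ 2 ≤ f r x := by
      have h := hsc r (θstar r) x
      rw [hgrad0 r, inner_zero_left] at h
      linarith
    have hinner : μ * ‖x - θstar r‖ ^ 2 ≤ ⟪g r x, x - θstar r⟫ := by
      have h1 := hsc r x (θstar r)
      have hneg : ⟪g r x, θstar r - x⟫ = -⟪g r x, x - θstar r⟫ := by
        rw [← inner_neg_right, neg_sub]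
      rw [hneg] at h1
      have hn : ‖θstar r - x‖ = ‖x - θstar r‖ := norm_sub_rev _ _
      rw [hn] at h1
      linarith
    have hgn : ‖g r x‖ ≤ L * ‖x - θstar r‖ := by
      have h := hgradLip r x (θstar r)
      rw [hgrad0 r, sub_zero] at h
      exact h
    have hne : ‖w (t + 1) r - θstar r‖ ≤ ‖x - η • g r x - θstar r‖ := by
      rw [hx]
      calc ‖proj (x - η • g r x) - θstar r‖
          = ‖proj (x - η • g r x) - proj (θstar r)‖ := by rw [hfix]
        _ ≤ ‖x - η • g r x - θstar r‖ := hproj _ _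
    have hexp : ‖x - η • g r x - θstar r‖ ^ 2
        = ‖x - θstar r‖ ^ 2 - 2 * η * ⟪g r x, x - θstar r⟫ + η ^ 2 * ‖g r x‖ ^ 2 := by
      have hrw : x - η • g r x - θstar r = (x - θstar r) - η • g r x := by
        abel
      rw [hrw, @norm_sub_sq_real, real_inner_smul_right, norm_smul,
        Real.norm_eq_abs, real_inner_comm (g r x), mul_pow, sq_abs]
      ring
    have hnn : 0 ≤ ‖x - η • g r x - θstar r‖ := norm_nonneg _
    have hsq : ‖w (t + 1) r - θstar r‖ ^ 2 ≤ ‖x - η • g r x - θstar r‖ ^ 2 := by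
      have := norm_nonneg (w (t + 1) r - θstar r)
      nlinarith
    have hgsq : ‖g r x‖ ^ 2 ≤ L ^ 2 * ‖x - θstar r‖ ^ 2 := by
      have hgn0 : 0 ≤ ‖g r x‖ := norm_nonneg _
      nlinarith [norm_nonneg (x - θstar r), mul_le_mul_of_nonneg_left hμL hμ.le]
    calc ‖w (t + 1) r - θstar r‖ ^ 2 ≤ ‖x - η • g r x - θstar r‖ ^ 2 := hsq
      _ = ‖x - θstar r‖ ^ 2 - 2 * η * ⟪g r x, x - θstar r⟫ + η ^ 2 * ‖g r x‖ ^ 2 := hexp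
      _ ≤ q * ‖x - θstar r‖ ^ 2 := by
          simp only [hqdef]
          nlinarith [sq_nonneg η]
  -- potential argument
  have key : ∀ T : ℕ,
      (∑ t ∈ Finset.range T, (L / 2) * ‖w t (rt t) - θstar (rt t)‖ ^ 2)
        + ∑ r : Fin R, (L / 2) * ‖w T r - θstar r‖ ^ 2 / (1 - q)
      ≤ ∑ r : Fin R, (L / 2) * ‖w 0 r - θstar r‖ ^ 2 / (1 - q) := by
    intro T
    induction T with
    | zero => simp
    | succ T ih =>
      rw [Finset.sum_range_succ]
      have hstep : ∑ r : Fin R, (L / 2) * ‖w (T + 1) r - θstar r‖ ^ 2 / (1 - q)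
          ≤ (∑ r : Fin R, (L / 2) * ‖w T r - θstar r‖ ^ 2 / (1 - q))
            - (L / 2) * ‖w T (rt T) - θstar (rt T)‖ ^ 2 := by
        have hterm : ∀ r : Fin R,
            (L / 2) * ‖w (T + 1) r - θstar r‖ ^ 2 / (1 - q)
            ≤ (L / 2) * ‖w T r - θstar r‖ ^ 2 / (1 - q)
              - (if r = rt T then (L / 2) * ‖w T r - θstar r‖ ^ 2 else 0) := by
          intro r
          by_cases hr : r = rt T
          · rw [if_pos hr]
            have hc := hcontr T r hr
            have hL : 0 ≤ L / 2 := by linarith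
            rw [div_le_iff₀ h1q, sub_mul, div_mul_cancel₀ _ (ne_of_gt h1q)]
            nlinarith [mul_le_mul_of_nonneg_left hc hL]
          · rw [if_neg hr]
            have heq : w (T + 1) r = w T r := by rw [hupd T r, if_neg hr]
            rw [heq]
            simp
        calc ∑ r : Fin R, (L / 2) * ‖w (T + 1) r - θstar r‖ ^ 2 / (1 - q)
            ≤ ∑ r : Fin R, ((L / 2) * ‖w T r - θstar r‖ ^ 2 / (1 - q)
              - (if r = rt T then (L / 2) * ‖w T r - θstar r‖ ^ 2 else 0)) :=
              Finset.sum_le_sum fun r _ => hterm r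
          _ = (∑ r : Fin R, (L / 2) * ‖w T r - θstar r‖ ^ 2 / (1 - q))
              - (L / 2) * ‖w T (rt T) - θstar (rt T)‖ ^ 2 := by
              rw [Finset.sum_sub_distrib, Finset.sum_ite_eq' Finset.univ (rt T)
                (fun r => (L / 2) * ‖w T r - θstar r‖ ^ 2)]
              simp only [Finset.mem_univ, if_true]
      linarith
  have hfin := key T
  have hsum : (∑ t ∈ Finset.range T, (f (rt t) (w t (rt t)) - f (rt t) (θstar (rt t))))
      ≤ ∑ t ∈ Finset.range T, (L / 2) * ‖w t (rt t) - θstar (rt t)‖ ^ 2 :=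
    Finset.sum_le_sum fun t _ => hsub (rt t) (w t (rt t))
  have hpos : 0 ≤ ∑ r : Fin R, (L / 2) * ‖w T r - θstar r‖ ^ 2 / (1 - q) := by
    apply Finset.sum_nonneg
    intro r _
    apply div_nonneg _ h1q.le
    have hL : (0:ℝ) ≤ L / 2 := by linarith
    exact mul_nonneg hL (sq_nonneg _)
  have hrw0 : (∑ r : Fin R, (L / 2) * ‖w 0 r - θstar r‖ ^ 2 / (1 - q))
      = ∑ r : Fin R, (L / 2) * ‖w0 r - θstar r‖ ^ 2 / (1 - q) := by
    apply Finset.sum_congr rfl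
    intro r _
    rw [hw0 r]
  rw [hrw0] at hfin
  calc (∑ t ∈ Finset.range T, (f (rt t) (w t (rt t)) - f (rt t) (θstar (rt t))))
      ≤ ∑ t ∈ Finset.range T, (L / 2) * ‖w t (rt t) - θstar (rt t)‖ ^ 2 := hsum
    _ ≤ ∑ r : Fin R, (L / 2) * ‖w0 r - θstar r‖ ^ 2 / (1 - q) := by linarith
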